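/- arXiv:2201.12846 — 2 statements merged into one kernel-verified Lean document; each statement's English description precedes it below -/
import Mathlib

section
/- A connected R-full cell complex of rank R is closed if and only if it is graph-based and (R+1)-regular, i.e., every vertex is contained in exactly R+1 edges. -/
/-!
Fix a vertex `a`. A cell `x ∋ a` contains exactly `rk x` edges at `a`, and these edges determine
`x` among the cells through `a` (compare `x` with its intersection with another cell). The count
goes by induction on the rank: between cells of ranks `j` and `j + 2` the diamond property leaves
room for exactly two new edges, while fullness realises every set of edges at `a` as a cell.
Hence the cofaces of a cell `x ∋ a` correspond to the edges at `a` outside `x`, so a sub-maximal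
cell lies in `deg a - (R - 1)` maximal cells. Lying in exactly two is thus the same as
`deg a = R + 1`, and this degree also forces purity, as every cell of rank `< R` then has a coface.
-/

open scoped Classical

universe u v

/-- Underlying data of a combinatorial cell complex: a finite collection of
finite subsets of a vertex type `V` (the cells) together with a rank function. -/
structure Precc (V : Type u) where
  cells : Finset (Finset V)
  rk : Finset V → ℕ

namespace Precc

variable {V : Type u} [DecidableEq V] [Fintype V]

/-- The axioms of a combinatorial cell complex (cc): cells are nonempty, every
vertex of a cell is a (rank 0) cell, rank-0 cells are exactly the singletons,
rank is strictly monotone, cells are closed under nonempty intersections, ranks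
have no gaps, and the diamond property. -/
def IsCC (K : Precc V) : Prop :=
  (∀ x ∈ K.cells, x.Nonempty) ∧
  (∀ x ∈ K.cells, ∀ a ∈ x, ({a} : Finset V) ∈ K.cells) ∧
  (∀ x ∈ K.cells, (K.rk x = 0 ↔ x.card = 1)) ∧
  (∀ x ∈ K.cells, ∀ y ∈ K.cells, x ⊂ y → K.rk x < K.rk y) ∧
  (∀ x ∈ K.cells, ∀ y ∈ K.cells, x ∩ y = ∅ ∨ x ∩ y ∈ K.cells) ∧
  (∀ x ∈ K.cells, ∀ y ∈ K.cells, x ⊂ y →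
    ∃ z ∈ K.cells, x ⊂ z ∧ z ⊆ y ∧ K.rk z = K.rk x + 1) ∧
  (∀ x ∈ K.cells, ∀ y ∈ K.cells, x ⊆ y → K.rk y = K.rk x + 2 →
    ∃ z₁ ∈ K.cells, ∃ z₂ ∈ K.cells, z₁ ≠ z₂ ∧
      ∀ z ∈ K.cells, ((x ⊆ z ∧ z ⊆ y ∧ K.rk z = K.rk x + 1) ↔ (z = z₁ ∨ z = z₂)))

/-- The set of cofaces of a cell. -/
noncomputable def cface (K : Precc V) (x : Finset V) : Finset (Finset V) :=
  K.cells.filter fun y => x ⊆ y ∧ K.rk y = K.rk x + 1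

/-- The set of faces of a cell. -/
noncomputable def face (K : Precc V) (x : Finset V) : Finset (Finset V) :=
  K.cells.filter fun y => y ⊆ x ∧ K.rk y + 1 = K.rk x

/-- The rank (dimension) of the complex. -/
def Rk (K : Precc V) : ℕ := K.cells.sup K.rk

/-- The set of cells of a given rank. -/
noncomputable def cellsOfRank (K : Precc V) (r : ℕ) : Finset (Finset V) :=
  K.cells.filter fun x => K.rk x = r

/-- The dual set of a set of vertices: the maximal cells containing it. -/
noncomputable def dualSet (K : Precc V) (A : Finset V) : Finset (Finset V) :=
  (K.cellsOfRank K.Rk).filter fun z => A ⊆ z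

/-- A cc is pure if every maximal cell has maximal rank. -/
def Pure (K : Precc V) : Prop :=
  ∀ x ∈ K.cells, (∀ y ∈ K.cells, ¬ x ⊂ y) → K.rk x = K.Rk

/-- A cc is graph-based if every edge (1-cell) has exactly two vertices. -/
def GraphBased (K : Precc V) : Prop :=
  ∀ e ∈ K.cells, K.rk e = 1 → e.card = 2

/-- Non-branching: every sub-maximal cell lies in at most two maximal cells. -/
def NonBranching (K : Precc V) : Prop :=
  ∀ y ∈ K.cells, K.rk y + 1 = K.Rk → (K.dualSet y).card ≤ 2

def NonSingular (K : Precc V) : Prop :=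
  K.GraphBased ∧ K.Pure ∧ K.NonBranching

/-- Closed: non-singular and every sub-maximal cell lies in exactly two
maximal cells. -/
def Closed (K : Precc V) : Prop :=
  K.NonSingular ∧ ∀ y ∈ K.cells, K.rk y + 1 = K.Rk → (K.dualSet y).card = 2

/-- Cells of the boundary: cells contained in a sub-maximal cell lying in
exactly one maximal cell. -/
noncomputable def bdryCells (K : Precc V) : Finset (Finset V) :=
  K.cells.filter fun x =>
    ∃ y ∈ K.cells, x ⊆ y ∧ K.rk y + 1 = K.Rk ∧ (K.dualSet y).card = 1

/-- The boundary complex. -/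
noncomputable def boundary (K : Precc V) : Precc V :=
  ⟨K.bdryCells, K.rk⟩

/-- The dual complex of a (pure) cc, with rank of the dual cell of `x` equal
to `Rk K - rk x` (encoded intrinsically via the intersection of the dual set). -/
noncomputable def dual (K : Precc V) : Precc (Finset V) :=
  ⟨K.cells.image K.dualSet, fun A => K.Rk - K.rk (A.inf id)⟩

/-- The barycentric subdivision: cells are nonempty chains of cells of `K`. -/
noncomputable def bdiv (K : Precc V) : Precc (Finset V) :=
  ⟨K.cells.powerset.filter fun c => c.Nonempty ∧ ∀ x ∈ c, ∀ y ∈ c, x ⊆ y ∨ y ⊆ x,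
   fun c => c.card - 1⟩

/-- Isomorphism of (pre)cell complexes: a rank-preserving bijection between the
cell sets preserving and reflecting inclusions. -/
def IsIso {A : Type u} {B : Type v} (K : Precc A) (L : Precc B) : Prop :=
  ∃ f : Finset A → Finset B,
    Set.BijOn f ↑K.cells ↑L.cells ∧
    (∀ x ∈ K.cells, ∀ y ∈ K.cells, (x ⊆ y ↔ f x ⊆ f y)) ∧
    (∀ x ∈ K.cells, L.rk (f x) = K.rk x)

/-- Adjacency of two vertices via an edge of `K`. -/
def EdgeRel (K : Precc V) (a b : V) : Prop :=
  ({a, b} : Finset V) ∈ K.cells ∧ K.rk ({a, b} : Finset V) = 1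

/-- Connectedness of a cc: graph-based, and the 1-skeleton is connected. -/
def Connected (K : Precc V) : Prop :=
  K.GraphBased ∧ ∀ a b : V, ({a} : Finset V) ∈ K.cells → ({b} : Finset V) ∈ K.cells →
    Relation.ReflTransGen K.EdgeRel a b

/-- Cell-connectedness: the 1-skeleton of every cell is connected. -/
def CellConnected (K : Precc V) : Prop :=
  K.GraphBased ∧ ∀ x ∈ K.cells, ∀ a ∈ x, ∀ b ∈ x,
    Relation.ReflTransGen (fun s t => s ∈ x ∧ t ∈ x ∧ K.EdgeRel s t) a b

/-- A local cc: connected and cell-connected. -/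
def LocalCC (K : Precc V) : Prop := K.Connected ∧ K.CellConnected

/-- The vertex set of a cc. -/
noncomputable def vertices (K : Precc V) : Finset V :=
  Finset.univ.filter fun a => ({a} : Finset V) ∈ K.cells

/-- `J` is a sub-cell complex of `K`. -/
def Subcomplex (J K : Precc V) : Prop :=
  J.cells ⊆ K.cells ∧ ∀ x ∈ J.cells, J.rk x = K.rk x

/-- The edges of `K` containing a given vertex. -/
noncomputable def EdgesAt (K : Precc V) (a : V) : Finset (Finset V) :=
  K.cells.filter fun e => K.rk e = 1 ∧ a ∈ e

/-- The edges of `K` at a vertex `a` that are contained in a cell `x`. -/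
noncomputable def edgesIn (K : Precc V) (a : V) (x : Finset V) : Finset (Finset V) :=
  (K.EdgesAt a).filter fun e => e ⊆ x

/-- `r`-fullness: every set of `j` edges at a vertex (`2 ≤ j ≤ r`) is the set of
edges at that vertex of some `j`-cell. -/
def RFull (K : Precc V) (r : ℕ) : Prop :=
  ∀ a : V, ({a} : Finset V) ∈ K.cells → ∀ j : ℕ, 2 ≤ j → j ≤ r →
    ∀ S ⊆ K.EdgesAt a, S.card = j →
      ∃ x ∈ K.cells, K.rk x = j ∧ K.edgesIn a x = S

/-- Fullness (= 2-fullness). -/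
def Full (K : Precc V) : Prop := K.RFull 2

/-- `n`-regularity: every vertex lies in exactly `n` edges. -/
def Regular (K : Precc V) (n : ℕ) : Prop :=
  ∀ a ∈ K.vertices, (K.EdgesAt a).card = n

/-- `m`-edge-regularity: every edge lies in exactly `m` 2-cells. -/
def EdgeRegular (K : Precc V) (m : ℕ) : Prop :=
  ∀ e ∈ K.cells, K.rk e = 1 → ((K.cellsOfRank 2).filter fun C => e ⊆ C).card = m

/-- Simplicial complex: every nonempty subset of a cell is a cell. -/
def Simplicial (K : Precc V) : Prop :=
  ∀ x ∈ K.cells, ∀ y : Finset V, y ⊆ x → y.Nonempty → y ∈ K.cells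

/-- Adjacency in the dual graph: two distinct maximal cells meeting along an
interior sub-maximal cell. -/
def DualAdj (K : Precc V) (z z' : Finset V) : Prop :=
  z ∈ K.cellsOfRank K.Rk ∧ z' ∈ K.cellsOfRank K.Rk ∧ z ≠ z' ∧
  ∃ y ∈ K.cells, K.rk y + 1 = K.Rk ∧ y ⊆ z ∧ y ⊆ z' ∧ (K.dualSet y).card = 2

/-- A pinch: a cell whose set of containing maximal cells induces a
disconnected subgraph of the dual graph. -/
def IsPinch (K : Precc V) (x : Finset V) : Prop :=
  ¬ ∀ z ∈ K.dualSet x, ∀ z' ∈ K.dualSet x,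
      Relation.ReflTransGen
        (fun a b => a ∈ K.dualSet x ∧ b ∈ K.dualSet x ∧ K.DualAdj a b) z z'

/-- Non-pinching: no `K`-pinch and no `∂K`-pinch. -/
def NonPinching (K : Precc V) : Prop :=
  (∀ x ∈ K.cells, ¬ K.IsPinch x) ∧ (∀ x ∈ K.boundary.cells, ¬ K.boundary.IsPinch x)

/-- The Euler characteristic. -/
noncomputable def chi (K : Precc V) : ℤ :=
  ∑ r ∈ Finset.range (K.Rk + 1), (-1 : ℤ) ^ r * ((K.cellsOfRank r).card : ℤ)

/-- Restriction of `K` to the cells contained in `A`. -/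
noncomputable def restrict (K : Precc V) (A : Finset V) : Precc V :=
  ⟨K.cells.filter fun x => x ⊆ A, K.rk⟩

/-- A shelling of a (non-singular) cc: for rank 0 the trivial order on the one
point, for rank ≥ 1 a linear order of the facets such that the boundary of the
first facet has a shelling and each facet meets the previous ones in a
non-singular complex of rank one less that has a shelling completable into a
shelling of the boundary of the facet, with the boundary conditions of
Definition 4.9 of the paper (see `IsShelling` below).
The intersection of the `k`-th facet with the union of the previous ones,
as a subcomplex of `K`. -/
noncomputable def interComplex (K : Precc V) (L : List (Finset V)) (k : ℕ)
    (hk : k < L.length) : Precc V :=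
  K.restrict (L.get ⟨k, hk⟩ ∩ (L.take k).foldr (· ∪ ·) ∅)

set_option maxHeartbeats 1000000 in
inductive IsShelling : Precc V → List (Finset V) → Prop where
  | point (K : Precc V) (x : Finset V) (hx : K.cells = {x}) (h0 : K.rk x = 0) :
      IsShelling K [x]
  | step (K : Precc V) (L : List (Finset V)) (L₀ : List (Finset V))
      (S S' : ℕ → List (Finset V))
      (hR : 1 ≤ K.Rk) (hnd : L.Nodup) (hne : L ≠ [])
      (henum : L.toFinset = K.cellsOfRank K.Rk)
      (hfirst : IsShelling ((K.restrict L.headI).boundary) L₀)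
      (hS : ∀ (k : ℕ) (hk : k < L.length), 0 < k →
        IsShelling (K.interComplex L k hk) (S k))
      (hS' : ∀ (k : ℕ) (hk : k < L.length), 0 < k →
        IsShelling ((K.restrict (L.get ⟨k, hk⟩)).boundary) (S' k))
      (hpre : ∀ (k : ℕ), k < L.length → 0 < k → S k <+: S' k)
      (hns : ∀ (k : ℕ) (hk : k < L.length), 0 < k →
        (K.interComplex L k hk).NonSingular ∧
        (K.interComplex L k hk).Rk + 1 = K.Rk ∧
        (k < L.length - 1 → (K.interComplex L k hk).bdryCells.Nonempty) ∧
        ((K.interComplex L k hk).bdryCells = ∅ →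
          k = L.length - 1 ∧ K.Closed ∧
          (K.interComplex L k hk).cells = ((K.restrict (L.get ⟨k, hk⟩)).boundary).cells)) :
      IsShelling K L

/-- A shellable cc. -/
def Shellable (K : Precc V) : Prop :=
  K.NonSingular ∧ ∃ L : List (Finset V), IsShelling K L

/-- The connection relation: `∇^a_b e = f`, i.e. `f` is the edge at `b`
associated to the edge `e` at `a` via the unique 2-cell containing `e` and the
edge `{a,b}` (and `{a,b}` is sent to itself). -/
def ConnRel (K : Precc V) (a b : V) (e f : Finset V) : Prop :=
  (e = ({a, b} : Finset V) ∧ f = ({a, b} : Finset V)) ∨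
  (e ≠ ({a, b} : Finset V) ∧ f ≠ ({a, b} : Finset V) ∧
    e ∈ K.cells ∧ f ∈ K.cells ∧ K.rk e = 1 ∧ K.rk f = 1 ∧ a ∈ e ∧ b ∈ f ∧
    ∃ C ∈ K.cells, K.rk C = 2 ∧ e ⊆ C ∧ ({a, b} : Finset V) ⊆ C ∧ f ⊆ C)

/-- `C` is a connected component of a 2-cell of `K`. -/
def IsComponentOfTwoCell (K : Precc V) (C : Finset V) : Prop :=
  ∃ C₀ ∈ K.cells, K.rk C₀ = 2 ∧ C ⊆ C₀ ∧ C.Nonempty ∧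
    (∀ e ∈ K.cells, K.rk e = 1 → e ⊆ C₀ → (e ∩ C).Nonempty → e ⊆ C) ∧
    (∀ a ∈ C, ∀ b ∈ C,
      Relation.ReflTransGen (fun s t => s ∈ C ∧ t ∈ C ∧ K.EdgeRel s t) a b)

/-- `c` is a cyclic enumeration of the vertex set `C` along edges of `K`. -/
def IsCycleOf (K : Precc V) (C : Finset V) (c : List V) : Prop :=
  c ≠ [] ∧ c.Nodup ∧ c.toFinset = C ∧
  ∀ a : V, c.head? = some a → List.Chain' K.EdgeRel (c ++ [a])

/-- A path in the 1-skeleton, recorded by its list of visited vertices. -/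
def IsPathList (K : Precc V) (l : List V) : Prop :=
  l ≠ [] ∧ List.Chain' K.EdgeRel l

/-- Transport of edges along a path via the connection. -/
inductive Transport (K : Precc V) : List V → Finset V → Finset V → Prop where
  | single (a : V) (e : Finset V) : Transport K [a] e e
  | cons {a b : V} {l : List V} {e f g : Finset V} :
      ConnRel K a b e f → Transport K (b :: l) f g → Transport K (a :: b :: l) e g

/-- `p` and `p'` are the two complementary arcs of the boundary cycle of the
2-cell component `C`, with the same endpoints. -/
def ComplementaryArcs (K : Precc V) (C : Finset V) (p p' : List V) : Prop :=
  p ≠ [] ∧ p' ≠ [] ∧ p.head? = p'.head? ∧ p.getLast? = p'.getLast? ∧ p.Nodup ∧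
  ∃ c : List V, IsCycleOf K C c ∧ ∃ a : V, c.head? = some a ∧
    (p ++ p'.reverse.tail = c ++ [a] ∨ p' ++ p.reverse.tail = c ++ [a])

/-- Elementary moves of paths: an edge move (deleting a back-and-forth along an
edge) and a 2-cell move (replacing an arc of a 2-cell component by the
complementary arc). -/
inductive Move (K : Precc V) : List V → List V → Prop where
  | edgeDel (a b : List V) (u w : V) (h : K.EdgeRel u w) :
      Move K (a ++ u :: w :: u :: b) (a ++ u :: b)
  | cellMove (a b p p' : List V) (C : Finset V)
      (hC : K.IsComponentOfTwoCell C) (harc : K.ComplementaryArcs C p p') :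
      Move K (a ++ p ++ b) (a ++ p' ++ b)

/-- Homotopy of paths: generated by finitely many moves (and their inverses). -/
def Homotopic (K : Precc V) (p q : List V) : Prop :=
  Relation.ReflTransGen (fun l l' => Move K l l' ∨ Move K l' l) p q

/-- Monodromy-freedom: the holonomy of the connection around the boundary loop
of any connected component of a 2-cell is the identity on the incident edges. -/
def MonodromyFree (K : Precc V) : Prop :=
  ∀ C : Finset V, K.IsComponentOfTwoCell C → ∀ c : List V, K.IsCycleOf C c →
    ∀ a : V, c.head? = some a →
      ∀ e f : Finset V, e ∈ K.cells → K.rk e = 1 → e ∩ C = {a} →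
        Transport K (c ++ [a]) e f → f = e

/-- Evenness: every connected component of every 2-cell has an even number of
vertices. -/
def EvenCC (K : Precc V) : Prop :=
  ∀ C : Finset V, K.IsComponentOfTwoCell C → Even C.card

/-- The collar of a vertex set `A` in `K`: cells meeting `A` properly. -/
noncomputable def collarCells (K : Precc V) (A : Finset V) : Finset (Finset V) :=
  K.cells.filter fun x => (x ∩ A).Nonempty ∧ ¬ x ⊆ A

/-- The set `E^x_A` of edges of `x` with exactly one vertex in `A`. -/
noncomputable def edgeCollar (K : Precc V) (A : Finset V) (x : Finset V) : Finset (Finset V) :=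
  K.cells.filter fun e => K.rk e = 1 ∧ e ⊆ x ∧ (e ∩ A).card = 1

/-- The `∼`-dual of a cell: the union of its dual in `K` and its dual in `∂K`. -/
noncomputable def bdualSet (K : Precc V) (x : Finset V) : Finset (Finset V) :=
  K.dualSet x ∪ (K.boundary.cells.filter fun y => K.rk y + 1 = K.Rk ∧ x ⊆ y)

/-- `J` is a (possibly empty) union of connected components of `K`. -/
def IsUnionOfComponents (K J : Precc V) : Prop :=
  ∃ W : Finset V, W ⊆ K.vertices ∧
    (∀ a ∈ W, ∀ b : V, Relation.ReflTransGen K.EdgeRel a b → b ∈ W) ∧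
    J.cells = K.cells.filter fun x => x ⊆ W

/-- `g` is the greatest lower bound of `S` among the cells of `K`. -/
def IsMeetOf (K : Precc V) (S : Finset (Finset V)) (g : Finset V) : Prop :=
  g ∈ K.cells ∧ (∀ s ∈ S, g ⊆ s) ∧ ∀ b ∈ K.cells, (∀ s ∈ S, b ⊆ s) → b ⊆ g

/-- `g` is the least upper bound of `S` among the cells of `K`. -/
def IsJoinOf (K : Precc V) (S : Finset (Finset V)) (g : Finset V) : Prop :=
  g ∈ K.cells ∧ (∀ s ∈ S, s ⊆ g) ∧ ∀ b ∈ K.cells, (∀ s ∈ S, s ⊆ b) → g ⊆ b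

/-- A reduction `ρ : J → K` (so that `J` is a subdivision of `K`). -/
def IsReduction (J K : Precc V) (ρ : Finset V → Finset V) : Prop :=
  (∀ x ∈ J.cells, ρ x ∈ K.cells) ∧
  (∀ y ∈ K.cells, ∃ x ∈ J.cells, ρ x = y) ∧
  (∀ x ∈ J.cells, ∀ y ∈ J.cells, x ⊆ y → ρ x ⊆ ρ y) ∧
  (∀ x ∈ J.cells, ∀ y ∈ J.cells, K.rk (ρ x) = 0 → ρ x = ρ y → x = y) ∧
  (∀ x ∈ J.cells, ∀ g : Finset V, IsMeetOf J (J.cface x) g →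
    ∀ h : Finset V, IsMeetOf K ((J.cface x).image ρ) h → ρ g = h) ∧
  (∀ x ∈ J.cells, ∀ y ∈ K.cells, ρ x ⊆ y →
    ∃ w ∈ J.cells, x ⊆ w ∧ J.rk w = K.rk y ∧ ρ w = y) ∧
  (∀ x ∈ J.cells, J.rk x + 1 = K.rk (ρ x) →
    ((J.cface x).filter fun w => ρ w = ρ x).card = 2) ∧
  (∀ x ∈ J.cells, J.rk x = K.rk (ρ x) →
    ∀ y ∈ K.cface (ρ x), ((J.cface x).filter fun w => ρ w = y).card = 1)

/-- A collapse `π : J → K` (so that `J` is an expansion of `K`). -/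
def IsCollapse (J K : Precc V) (π : Finset V → Finset V) : Prop :=
  (∀ x ∈ J.cells, π x ∈ K.cells) ∧
  (∀ y ∈ K.cells, ∃ x ∈ J.cells, π x = y) ∧
  (∀ x ∈ J.cells, ∀ y ∈ J.cells, x ⊆ y → π x ⊆ π y) ∧
  (∀ x ∈ J.cells, ∀ y ∈ J.cells, (∀ z ∈ K.cells, ¬ π x ⊂ z) → π x = π y → x = y) ∧
  (∀ x ∈ J.cells, 1 ≤ J.rk x → IsJoinOf K ((J.face x).image π) (π x)) ∧
  (∀ x ∈ J.cells, ∀ y ∈ K.cells, y ⊆ π x →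
    ∃ w ∈ J.cells, w ⊆ x ∧ J.rk w = K.rk y ∧ π w = y) ∧
  (∀ x ∈ J.cells, K.rk (π x) + 1 = J.rk x →
    ((J.face x).filter fun w => π w = π x).card = 2) ∧
  (∀ x ∈ J.cells, J.rk x = K.rk (π x) →
    ∀ y ∈ K.face (π x), ((J.face x).filter fun w => π w = y).card = 1)

/-- The domain `E_a^{dual b}` of the connection `∇^a_b`: edges at `a` lying in
a common 2-cell with the edge `{a,b}`. -/
noncomputable def connDomain (K : Precc V) (a b : V) : Finset (Finset V) :=
  (K.EdgesAt a).filter fun e =>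
    ∃ C ∈ K.cells, K.rk C = 2 ∧ e ⊆ C ∧ ({a, b} : Finset V) ⊆ C

end Precc

namespace Precc

variable {V : Type u} {K : Precc V}

lemma rk_le_Rk {x : Finset V} (hx : x ∈ K.cells) : K.rk x ≤ K.Rk :=
  Finset.le_sup hx

variable [DecidableEq V]

lemma mem_EdgesAt {a : V} {e : Finset V} :
    e ∈ K.EdgesAt a ↔ e ∈ K.cells ∧ K.rk e = 1 ∧ a ∈ e := by
  simp [EdgesAt]

lemma mem_edgesIn {a : V} {x e : Finset V} :
    e ∈ K.edgesIn a x ↔ e ∈ K.EdgesAt a ∧ e ⊆ x :=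
  Finset.mem_filter

lemma mem_cface {x z : Finset V} :
    z ∈ K.cface x ↔ z ∈ K.cells ∧ x ⊆ z ∧ K.rk z = K.rk x + 1 :=
  Finset.mem_filter

lemma mem_vertices [Fintype V] {a : V} : a ∈ K.vertices ↔ ({a} : Finset V) ∈ K.cells := by
  simp [vertices]

lemma edgesIn_subset_EdgesAt (a : V) (x : Finset V) : K.edgesIn a x ⊆ K.EdgesAt a :=
  Finset.filter_subset _ _

lemma edgesIn_mono {a : V} {x y : Finset V} (h : x ⊆ y) : K.edgesIn a x ⊆ K.edgesIn a y :=
  fun _ he => mem_edgesIn.2 ⟨(mem_edgesIn.1 he).1, (mem_edgesIn.1 he).2.trans h⟩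

lemma edgesIn_inter (a : V) (x y : Finset V) :
    K.edgesIn a (x ∩ y) = K.edgesIn a x ∩ K.edgesIn a y := by
  ext e
  simp only [Finset.mem_inter, mem_edgesIn, Finset.subset_inter_iff]
  tauto

lemma dualSet_eq_cface {y : Finset V} (hy : K.rk y + 1 = K.Rk) : K.dualSet y = K.cface y := by
  ext z
  simp only [dualSet, cellsOfRank, mem_cface, Finset.mem_filter, hy]
  tauto

namespace IsCC

lemma rk_mono (hK : K.IsCC) {x y : Finset V} (hx : x ∈ K.cells) (hy : y ∈ K.cells) (h : x ⊆ y) :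
    K.rk x ≤ K.rk y := by
  rcases h.eq_or_ssubset with rfl | hxy
  · exact le_rfl
  · exact (hK.2.2.2.1 x hx y hy hxy).le

lemma exists_subcell (hK : K.IsCC) {x : Finset V} {a : V} (hx : x ∈ K.cells) (ha : a ∈ x) :
    ∀ i ≤ K.rk x, ∃ y ∈ K.cells, a ∈ y ∧ y ⊆ x ∧ K.rk y = i := by
  intro i
  induction i with
  | zero =>
    intro _
    have ha' : ({a} : Finset V) ∈ K.cells := hK.2.1 x hx a ha
    exact ⟨{a}, ha', Finset.mem_singleton_self a, Finset.singleton_subset_iff.2 ha,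
      (hK.2.2.1 _ ha').2 (Finset.card_singleton a)⟩
  | succ i ih =>
    intro hi
    obtain ⟨y, hy, hay, hyx, hry⟩ := ih (Nat.le_of_succ_le hi)
    have hyx' : y ⊂ x := hyx.ssubset_of_ne (by rintro rfl; omega)
    obtain ⟨z, hz, hyz, hzx, hrz⟩ := hK.2.2.2.2.2.1 y hy x hx hyx'
    exact ⟨z, hz, hyz.subset hay, hzx, by omega⟩

lemma card_between_eq_two (hK : K.IsCC) {x y : Finset V} (hx : x ∈ K.cells)
    (hy : y ∈ K.cells) (hxy : x ⊆ y) (hr : K.rk y = K.rk x + 2) :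
    (K.cells.filter fun z => x ⊆ z ∧ z ⊆ y ∧ K.rk z = K.rk x + 1).card = 2 := by
  obtain ⟨z₁, hz₁, z₂, hz₂, hne, hchar⟩ := hK.2.2.2.2.2.2 x hx y hy hxy hr
  have hpair : (K.cells.filter fun z => x ⊆ z ∧ z ⊆ y ∧ K.rk z = K.rk x + 1) = {z₁, z₂} := by
    ext z
    simp only [Finset.mem_filter, Finset.mem_insert, Finset.mem_singleton]
    constructor
    · rintro ⟨hz, h⟩
      exact (hchar z hz).1 h
    · rintro (rfl | rfl)
      · exact ⟨hz₁, (hchar _ hz₁).2 (Or.inl rfl)⟩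
      · exact ⟨hz₂, (hchar _ hz₂).2 (Or.inr rfl)⟩
  rw [hpair, Finset.card_pair hne]

lemma subset_of_edgesIn_subset (hK : K.IsCC) {a : V} {n : ℕ}
    (hcount : ∀ w ∈ K.cells, a ∈ w → K.rk w ≤ n → (K.edgesIn a w).card = K.rk w)
    {x z : Finset V} (hz : z ∈ K.cells) (hx : x ∈ K.cells) (haz : a ∈ z) (hax : a ∈ x)
    (hzn : K.rk z ≤ n) (h : K.edgesIn a z ⊆ K.edgesIn a x) : z ⊆ x := by
  have haw : a ∈ z ∩ x := Finset.mem_inter.2 ⟨haz, hax⟩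
  have hw : z ∩ x ∈ K.cells :=
    (hK.2.2.2.2.1 z hz x hx).resolve_left (Finset.ne_empty_of_mem haw)
  have hwn : K.rk (z ∩ x) ≤ n := (hK.rk_mono hw hz Finset.inter_subset_left).trans hzn
  have hrk : K.rk (z ∩ x) = K.rk z := by
    rw [← hcount _ hw haw hwn, ← hcount z hz haz hzn, edgesIn_inter, Finset.inter_eq_left.2 h]
  by_contra hzx
  have hlt : z ∩ x ⊂ z :=
    Finset.inter_subset_left.ssubset_of_ne (fun heq => hzx (Finset.inter_eq_left.1 heq))
  exact (hK.2.2.2.1 _ hw z hz hlt).ne hrk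

end IsCC

lemma GraphBased.edgesIn_eq_singleton (hgb : K.GraphBased) {a : V} {e : Finset V}
    (he : e ∈ K.cells) (hre : K.rk e = 1) (hae : a ∈ e) : K.edgesIn a e = {e} := by
  ext f
  simp only [mem_edgesIn, mem_EdgesAt, Finset.mem_singleton]
  constructor
  · rintro ⟨⟨hf, hrf, -⟩, hfe⟩
    exact Finset.eq_of_subset_of_card_le hfe (by rw [hgb e he hre, hgb f hf hrf])
  · rintro rfl
    exact ⟨⟨he, hre, hae⟩, subset_rfl⟩

/-- For `|S| = 1` the cell is the edge itself, which `RFull` does not cover. -/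
lemma RFull.exists_cell_edgesIn_eq {r : ℕ} (hfull : K.RFull r) (hgb : K.GraphBased) {a : V}
    (ha : ({a} : Finset V) ∈ K.cells) {S : Finset (Finset V)} (hS : S ⊆ K.EdgesAt a)
    (hS₁ : 1 ≤ S.card) (hSr : S.card ≤ r) :
    ∃ x ∈ K.cells, a ∈ x ∧ K.rk x = S.card ∧ K.edgesIn a x = S := by
  rcases hS₁.eq_or_lt with h1 | h2
  · obtain ⟨e, rfl⟩ := Finset.card_eq_one.1 h1.symm
    obtain ⟨he, hre, hae⟩ := mem_EdgesAt.1 (hS (Finset.mem_singleton_self e))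
    exact ⟨e, he, hae, by rw [hre, Finset.card_singleton], hgb.edgesIn_eq_singleton he hre hae⟩
  · obtain ⟨x, hx, hrx, hxS⟩ := hfull a ha S.card h2 hSr S hS rfl
    obtain ⟨e, he⟩ := Finset.card_pos.1 hS₁
    have hex := mem_edgesIn.1 (hxS ▸ he)
    exact ⟨x, hx, hex.2 (mem_EdgesAt.1 hex.1).2.2, hrx, hxS⟩

/-- The cofaces of `y` whose edges at `a` lie in `S` correspond to the edges of `S` not in `y`:
each such coface has exactly one new edge at `a`, and by fullness every new edge arises. -/
lemma card_cface_filter_edgesIn_subset (hK : K.IsCC) (hgb : K.GraphBased) {r : ℕ}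
    (hfull : K.RFull r) {a : V} {y : Finset V} (hy : y ∈ K.cells) (hay : a ∈ y)
    (hyr : K.rk y < r)
    (hcount : ∀ w ∈ K.cells, a ∈ w → K.rk w ≤ K.rk y + 1 → (K.edgesIn a w).card = K.rk w)
    {S : Finset (Finset V)} (hS : S ⊆ K.EdgesAt a) (hyS : K.edgesIn a y ⊆ S) :
    ((K.cface y).filter fun z => K.edgesIn a z ⊆ S).card = (S \ K.edgesIn a y).card := by
  set E := K.edgesIn a y
  have hE : E.card = K.rk y := hcount y hy hay (Nat.le_succ _)
  have hsub : ∀ z ∈ K.cells, ∀ x ∈ K.cells, a ∈ z → a ∈ x → K.rk z ≤ K.rk y + 1 →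
      K.edgesIn a z ⊆ K.edgesIn a x → z ⊆ x :=
    fun z hz x hx haz hax => hK.subset_of_edgesIn_subset hcount hz hx haz hax
  have himage : ((K.cface y).filter fun z => K.edgesIn a z ⊆ S).image (K.edgesIn a) =
      (S \ E).image (insert · E) := by
    ext T
    simp only [Finset.mem_image, Finset.mem_filter, mem_cface, Finset.mem_sdiff]
    constructor
    · rintro ⟨z, ⟨⟨hz, hyz, hrz⟩, hzS⟩, rfl⟩
      obtain ⟨e, heE, he⟩ := Finset.exists_eq_insert_iff.2
        ⟨edgesIn_mono hyz, by rw [hE, hcount z hz (hyz hay) hrz.le, hrz]⟩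
      exact ⟨e, ⟨hzS (he ▸ Finset.mem_insert_self e E), heE⟩, he⟩
    · rintro ⟨e, ⟨heS, heE⟩, rfl⟩
      have hcard : (insert e E).card = K.rk y + 1 := by rw [Finset.card_insert_of_notMem heE, hE]
      obtain ⟨z, hz, haz, hrz, hzE⟩ := hfull.exists_cell_edgesIn_eq hgb (hK.2.1 y hy a hay)
        (Finset.insert_subset (hS heS) (hyS.trans hS)) (by omega) (by omega)
      refine ⟨z, ⟨⟨hz, hsub y hy z hz hay haz (Nat.le_succ _) ?_, by omega⟩, ?_⟩, hzE⟩
      · exact hzE ▸ Finset.subset_insert e E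
      · exact hzE ▸ Finset.insert_subset heS hyS
  have hinj : Set.InjOn (K.edgesIn a) ((K.cface y).filter fun z => K.edgesIn a z ⊆ S) := by
    intro z hz x hx hzx
    simp only [Finset.mem_coe, Finset.mem_filter, mem_cface] at hz hx
    exact (hsub z hz.1.1 x hx.1.1 (hz.1.2.1 hay) (hx.1.2.1 hay) hz.1.2.2.le hzx.subset).antisymm
      (hsub x hx.1.1 z hz.1.1 (hx.1.2.1 hay) (hz.1.2.1 hay) hx.1.2.2.le hzx.symm.subset)
  rw [← Finset.card_image_of_injOn hinj, himage, Finset.card_image_of_injOn]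
  exact (Finset.insert_inj_on E).mono fun e he => (Finset.mem_sdiff.1 he).2

/-- For a cell `x` of rank `j + 2` and a subcell `y ∋ a` of rank `j`, the
diamond property gives exactly two cofaces of `y` inside `x`, hence exactly two edges of `x` at `a`
outside `y`. -/
theorem card_edgesIn_eq_rk (hK : K.IsCC) (hgb : K.GraphBased) (hfull : K.RFull K.Rk) {a : V}
    {x : Finset V} (hx : x ∈ K.cells) (hax : a ∈ x) : (K.edgesIn a x).card = K.rk x := by
  induction hr : K.rk x using Nat.strong_induction_on generalizing x with
  | _ r ih =>
  match r, hr with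
  | 0, hr =>
    refine Finset.card_eq_zero.2 (Finset.eq_empty_of_forall_notMem fun e he => ?_)
    obtain ⟨he, hex⟩ := mem_edgesIn.1 he
    obtain ⟨he, hre, -⟩ := mem_EdgesAt.1 he
    have := Finset.card_le_card hex
    rw [hgb e he hre, (hK.2.2.1 x hx).1 hr] at this
    omega
  | 1, hr => rw [hgb.edgesIn_eq_singleton hx hr hax, Finset.card_singleton]
  | j + 2, hr =>
    obtain ⟨y, hy, hay, hyx, hry⟩ := hK.exists_subcell hx hax j (by omega)
    have hcount : ∀ w ∈ K.cells, a ∈ w → K.rk w ≤ K.rk y + 1 →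
        (K.edgesIn a w).card = K.rk w :=
      fun w hw haw hwr => ih _ (by omega) hw haw rfl
    have hcofaces : ((K.cface y).filter fun z => K.edgesIn a z ⊆ K.edgesIn a x) =
        K.cells.filter fun z => y ⊆ z ∧ z ⊆ x ∧ K.rk z = K.rk y + 1 := by
      ext z
      simp only [Finset.mem_filter, mem_cface]
      constructor
      · rintro ⟨⟨hz, hyz, hrz⟩, hzx⟩
        exact ⟨hz, hyz, hK.subset_of_edgesIn_subset hcount hz hx (hyz hay) hax hrz.le hzx, hrz⟩
      · rintro ⟨hz, hyz, hzx, hrz⟩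
        exact ⟨⟨hz, hyz, hrz⟩, edgesIn_mono hzx⟩
    have htwo := card_cface_filter_edgesIn_subset hK hgb hfull hy hay
      (by have := rk_le_Rk hx; omega) hcount (edgesIn_subset_EdgesAt a x) (edgesIn_mono hyx)
    rw [hcofaces, hK.card_between_eq_two hy hx hyx (by omega)] at htwo
    have := Finset.card_sdiff_add_card_eq_card (edgesIn_mono (K := K) (a := a) hyx)
    have := hcount y hy hay (Nat.le_succ _)
    omega

theorem card_cface_add_rk (hK : K.IsCC) (hgb : K.GraphBased) (hfull : K.RFull K.Rk) {a : V}
    {x : Finset V} (hx : x ∈ K.cells) (hax : a ∈ x) (hxR : K.rk x < K.Rk) :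
    (K.cface x).card + K.rk x = (K.EdgesAt a).card := by
  have h := card_cface_filter_edgesIn_subset hK hgb hfull hx hax hxR
    (fun w hw haw _ => card_edgesIn_eq_rk hK hgb hfull hw haw) subset_rfl
    (edgesIn_subset_EdgesAt a x)
  rw [Finset.filter_true_of_mem fun z _ => edgesIn_subset_EdgesAt a z] at h
  rw [h, ← card_edgesIn_eq_rk hK hgb hfull hx hax]
  exact Finset.card_sdiff_add_card_eq_card (edgesIn_subset_EdgesAt a x)

theorem pure_of_Rk_le_card_EdgesAt (hK : K.IsCC) (hgb : K.GraphBased) (hfull : K.RFull K.Rk)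
    (hdeg : ∀ a, ({a} : Finset V) ∈ K.cells → K.Rk ≤ (K.EdgesAt a).card) : K.Pure := by
  intro x hx hmax
  by_contra hne
  obtain ⟨a, hax⟩ := hK.1 x hx
  have hxR : K.rk x < K.Rk := (rk_le_Rk hx).lt_of_ne hne
  have hcard := card_cface_add_rk hK hgb hfull hx hax hxR
  obtain ⟨z, hz⟩ : (K.cface x).Nonempty :=
    Finset.card_pos.1 (by have := hdeg a (hK.2.1 x hx a hax); omega)
  obtain ⟨hz, hxz, hrz⟩ := mem_cface.1 hz
  exact hmax z hz (hxz.ssubset_of_ne (by rintro rfl; omega))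

end Precc

namespace Precc

variable {V : Type u} [DecidableEq V] [Fintype V]

/-- A connected `R`-full cc of rank `R` is closed iff it is
graph-based and `(R+1)`-regular. -/
theorem statement_9 (K : Precc V) (hK : K.IsCC) (hR : 2 ≤ K.Rk)
    (hconn : K.Connected) (hfull : K.RFull K.Rk) :
    K.Closed ↔ (K.GraphBased ∧ K.Regular (K.Rk + 1)) := by
  have hgb : K.GraphBased := hconn.1
  have hdual : ∀ y ∈ K.cells, K.rk y + 1 = K.Rk → ∀ a ∈ y,
      (K.dualSet y).card + K.rk y = (K.EdgesAt a).card := fun y hy hry a hay =>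
    dualSet_eq_cface hry ▸ card_cface_add_rk hK hgb hfull hy hay (by omega)
  constructor
  · rintro ⟨⟨-, hpure, -⟩, hclosed⟩
    refine ⟨hgb, fun a ha => ?_⟩
    obtain ⟨z, haz, hz, hzmax⟩ := K.cells.exists_le_maximal (mem_vertices.1 ha)
    have hrz : K.rk z = K.Rk := hpure z hz fun w hw hzw => hzw.not_subset (hzmax hw hzw.subset)
    obtain ⟨y, hy, hay, -, hry⟩ :=
      hK.exists_subcell hz (haz (Finset.mem_singleton_self a)) (K.Rk - 1) (by omega)
    have := hdual y hy (by omega) a hay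
    have := hclosed y hy (by omega)
    omega
  · rintro ⟨-, hreg⟩
    have hdeg : ∀ a, ({a} : Finset V) ∈ K.cells → (K.EdgesAt a).card = K.Rk + 1 :=
      fun a ha => hreg a (mem_vertices.2 ha)
    have htwo : ∀ y ∈ K.cells, K.rk y + 1 = K.Rk → (K.dualSet y).card = 2 := by
      intro y hy hry
      obtain ⟨a, hay⟩ := hK.1 y hy
      have := hdual y hy hry a hay
      have := hdeg a (hK.2.1 y hy a hay)
      omega
    have hpure := pure_of_Rk_le_card_EdgesAt hK hgb hfull fun a ha => by rw [hdeg a ha]; omega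
    exact ⟨⟨hgb, hpure, fun y hy hry => (htwo y hy hry).le⟩, htwo⟩

end Precc
end

section
/- Let K be a local cell complex and J ≤ K a sub-cell complex. Then the map sending a cell x in the collar K_J (cells intersecting the vertex set of J nontrivially and properly) to the set E^x_J of edges of x having exactly one vertex in J is an injective poset homomorphism whose inverse is also a poset homomorphism; i.e., x ⊆ y iff E^x_J ⊆ E^y_J for x, y ∈ K_J. -/
open scoped Classical

universe u v

namespace Precc

variable {V : Type u} [DecidableEq V] [Fintype V]

lemma mem_edgeCollar_iff (K : Precc V) {A x e : Finset V} :
    e ∈ K.edgeCollar A x ↔ e ∈ K.cells ∧ K.rk e = 1 ∧ e ⊆ x ∧ (e ∩ A).card = 1 := by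
  simp [edgeCollar, and_assoc]

lemma eq_of_subset_of_rk_le (K : Precc V) (hK : K.IsCC) {x y : Finset V}
    (hx : x ∈ K.cells) (hy : y ∈ K.cells) (hxy : x ⊆ y) (hr : K.rk y ≤ K.rk x) : x = y := by
  by_contra hne
  have := hK.2.2.2.1 x hx y hy
    (Finset.ssubset_def.mpr ⟨hxy, fun h => hne (Finset.Subset.antisymm hxy h)⟩)
  omega

lemma exists_rank_between (K : Precc V) (hK : K.IsCC) {c d : Finset V}
    (hc : c ∈ K.cells) (hd : d ∈ K.cells) (hcd : c ⊆ d) :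
    ∀ n, K.rk c + n ≤ K.rk d → ∃ w ∈ K.cells, c ⊆ w ∧ w ⊆ d ∧ K.rk w = K.rk c + n := by
  intro n
  induction n with
  | zero => exact fun _ => ⟨c, hc, Finset.Subset.refl c, hcd, rfl⟩
  | succ n IH =>
    intro hn
    obtain ⟨w, hw, hcw, hwd, hrw⟩ := IH (by omega)
    have hne : w ≠ d := by rintro rfl; omega
    obtain ⟨w', hw', hww', hw'd, hrw'⟩ := hK.2.2.2.2.2.1 w hw d hd
      (Finset.ssubset_def.mpr ⟨hwd, fun h => hne (Finset.Subset.antisymm hwd h)⟩)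
    exact ⟨w', hw', hcw.trans hww'.1, hw'd, by omega⟩

lemma crossing_not_subset (K : Precc V) (hK : K.IsCC) {A e : Finset V}
    (he : e ∈ K.cells) (hr : K.rk e = 1) (hcard : (e ∩ A).card = 1) : ¬ e ⊆ A := by
  intro h
  have h1 : e ∩ A = e := Finset.inter_eq_left.mpr h
  have h2 : e.card = 1 := by rw [← h1]; exact hcard
  have := (hK.2.2.1 e he).mpr h2
  omega

lemma edgeCollar_nonempty (K : Precc V) (hcc : K.CellConnected) {A x : Finset V}
    (hx : x ∈ K.collarCells A) : (K.edgeCollar A x).Nonempty := by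
  classical
  have hx' : x ∈ K.cells ∧ (x ∩ A).Nonempty ∧ ¬ x ⊆ A := by
    simpa [collarCells] using hx
  obtain ⟨hxc, ⟨a, ha⟩, hnsub⟩ := hx'
  obtain ⟨b, hbx, hbA⟩ := Finset.not_subset.mp hnsub
  have haA : a ∈ A := (Finset.mem_inter.mp ha).2
  have hax : a ∈ x := (Finset.mem_inter.mp ha).1
  have hpath := hcc.2 x hxc a hax b hbx
  have key : ∀ c, Relation.ReflTransGen (fun s t => s ∈ x ∧ t ∈ x ∧ K.EdgeRel s t) c b →
      c ∈ A → (K.edgeCollar A x).Nonempty := by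
    intro c hp
    induction hp using Relation.ReflTransGen.head_induction_on with
    | refl => exact fun h => absurd h hbA
    | @head c d h' t IH =>
      intro hcA
      obtain ⟨hcx, hdx, hcd⟩ := h'
      by_cases hdA : d ∈ A
      · exact IH hdA
      · refine ⟨{c, d}, K.mem_edgeCollar_iff.mpr ⟨hcd.1, hcd.2, ?_, ?_⟩⟩
        · intro v hv
          rcases Finset.mem_insert.mp hv with rfl | hv
          · exact hcx
          · rw [Finset.mem_singleton.mp hv]; exact hdx
        · have : ({c, d} : Finset V) ∩ A = {c} := by
            ext v
            simp only [Finset.mem_inter, Finset.mem_insert, Finset.mem_singleton]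
            constructor
            · rintro ⟨rfl | rfl, hvA⟩
              · rfl
              · exact absurd hvA hdA
            · rintro rfl; exact ⟨Or.inl rfl, hcA⟩
          rw [this, Finset.card_singleton]
  exact key a hpath haA

lemma deg_two (K : Precc V) (hK : K.IsCC) {x : Finset V} (hx : x ∈ K.cells)
    (hrk : K.rk x = 2) {a : V} (ha : a ∈ x) :
    (K.cells.filter fun g => (K.rk g = 1 ∧ g ⊆ x) ∧ a ∈ g).card = 2 := by
  classical
  have hsing : ({a} : Finset V) ∈ K.cells := hK.2.1 x hx a ha
  have hr0 : K.rk {a} = 0 := (hK.2.2.1 _ hsing).mpr (Finset.card_singleton a)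
  obtain ⟨z₁, hz₁, z₂, hz₂, hne, hch⟩ :=
    hK.2.2.2.2.2.2 {a} hsing x hx (Finset.singleton_subset_iff.mpr ha) (by omega)
  have hfil : (K.cells.filter fun g => (K.rk g = 1 ∧ g ⊆ x) ∧ a ∈ g) = {z₁, z₂} := by
    ext g
    simp only [Finset.mem_filter, Finset.mem_insert, Finset.mem_singleton]
    constructor
    · rintro ⟨hg, ⟨hg1, hgx⟩, hag⟩
      exact (hch g hg).mp ⟨Finset.singleton_subset_iff.mpr hag, hgx, by omega⟩
    · rintro (rfl | rfl)
      · obtain ⟨h1, h2, h3⟩ := (hch _ hz₁).mpr (Or.inl rfl)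
        exact ⟨hz₁, ⟨by omega, h2⟩, Finset.singleton_subset_iff.mp h1⟩
      · obtain ⟨h1, h2, h3⟩ := (hch _ hz₂).mpr (Or.inr rfl)
        exact ⟨hz₂, ⟨by omega, h2⟩, Finset.singleton_subset_iff.mp h1⟩
  rw [hfil, Finset.card_insert_of_notMem (by simpa using hne), Finset.card_singleton]

lemma even_edgeCollar (K : Precc V) (hK : K.IsCC) (hgb : K.GraphBased)
    {x : Finset V} (hx : x ∈ K.cells) (hrk : K.rk x = 2) (A : Finset V) :
    Even (K.edgeCollar A x).card := by
  classical
  set G := K.cells.filter (fun g => K.rk g = 1 ∧ g ⊆ x) with hGdef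
  have hGsub : ∀ g ∈ G, g ∈ K.cells ∧ K.rk g = 1 ∧ g ⊆ x := by
    intro g hg
    have := Finset.mem_filter.mp hg
    exact ⟨this.1, this.2.1, this.2.2⟩
  have hS : ∑ g ∈ G, (g ∩ A).card = ∑ a ∈ x ∩ A, (G.filter fun g => a ∈ g).card := by
    have h1 : ∀ g ∈ G, (g ∩ A).card = ((x ∩ A).filter fun a => a ∈ g).card := by
      intro g hg
      congr 1
      ext v
      have hgx := (hGsub g hg).2.2
      simp only [Finset.mem_inter, Finset.mem_filter]
      exact ⟨fun h => ⟨⟨hgx h.1, h.2⟩, h.1⟩, fun h => ⟨h.2, h.1.2⟩⟩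
    rw [Finset.sum_congr rfl h1]
    simp only [Finset.card_filter]
    exact Finset.sum_comm
  have hdeg : ∀ a ∈ x ∩ A, (G.filter fun g => a ∈ g).card = 2 := by
    intro a ha
    rw [hGdef, Finset.filter_filter]
    exact K.deg_two hK hx hrk (Finset.mem_inter.mp ha).1
  have heven : (∑ g ∈ G, (g ∩ A).card) % 2 = 0 := by
    rw [hS, Finset.sum_congr rfl hdeg, Finset.sum_const, smul_eq_mul]
    omega
  have hsplit := Finset.sum_filter_add_sum_filter_not G (fun g => (g ∩ A).card = 1)
    (fun g => (g ∩ A).card)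
  have hE : G.filter (fun g => (g ∩ A).card = 1) = K.edgeCollar A x := by
    rw [hGdef, Finset.filter_filter]
    ext g
    simp [edgeCollar, and_assoc]
  have h1 : ∑ g ∈ G.filter (fun g => (g ∩ A).card = 1), (g ∩ A).card
      = (K.edgeCollar A x).card := by
    rw [Finset.sum_congr rfl (fun g hg => (Finset.mem_filter.mp hg).2), hE,
      Finset.sum_const, smul_eq_mul, mul_one]
  have h2 : (∑ g ∈ G.filter (fun g => ¬ (g ∩ A).card = 1), (g ∩ A).card) % 2 = 0 := by
    rw [Finset.sum_nat_mod]
    have : ∀ g ∈ G.filter (fun g => ¬ (g ∩ A).card = 1), (g ∩ A).card % 2 = 0 := by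
      intro g hg
      obtain ⟨hgG, hgne⟩ := Finset.mem_filter.mp hg
      obtain ⟨hgc, hgr, _⟩ := hGsub g hgG
      have hle : (g ∩ A).card ≤ g.card := Finset.card_le_card Finset.inter_subset_left
      have := hgb g hgc hgr
      omega
    rw [Finset.sum_congr rfl this]
    simp
  rw [Nat.even_iff]
  omega

lemma collar_main (K : Precc V) (hK : K.IsCC) (hloc : K.LocalCC) (A : Finset V) :
    ∀ r : ℕ, ∀ x ∈ K.collarCells A, ∀ z ∈ K.cells, z ⊆ x →
      (∀ e ∈ K.edgeCollar A x, e ⊆ z) → K.rk x ≤ r → x ⊆ z := by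
  intro r
  induction r with
  | zero =>
    intro x hx z hz hzsub hE hr
    exfalso
    obtain ⟨e, he⟩ := K.edgeCollar_nonempty hloc.2 hx
    obtain ⟨hec, her, hex, _⟩ := K.mem_edgeCollar_iff.mp he
    have hxc : x ∈ K.cells := (Finset.mem_filter.mp hx).1
    by_cases h : e = x
    · subst h; omega
    · have := hK.2.2.2.1 e hec x hxc
        (Finset.ssubset_def.mpr ⟨hex, fun hh => h (Finset.Subset.antisymm hex hh)⟩)
      omega
  | succ r IH =>
    intro x hx z hz hzsub hE hr
    have hxc : x ∈ K.cells := (Finset.mem_filter.mp hx).1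
    obtain ⟨e, he⟩ := K.edgeCollar_nonempty hloc.2 hx
    obtain ⟨hec, her, hex, hecard⟩ := K.mem_edgeCollar_iff.mp he
    have hez : e ⊆ z := hE e he
    by_cases hxz : x ⊆ z
    · exact hxz
    exfalso
    by_cases hexx : e = x
    · exact hxz (hexx ▸ hez)
    have herk : K.rk e < K.rk x := hK.2.2.2.1 e hec x hxc
      (Finset.ssubset_def.mpr ⟨hex, fun h => hexx (Finset.Subset.antisymm hex h)⟩)
    -- C1: any proper subcell of x containing a crossing edge is contained in z
    have hC1 : ∀ w ∈ K.cells, w ⊆ x → w ≠ x → ∀ e' ∈ K.edgeCollar A x, e' ⊆ w → w ⊆ z := by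
      intro w hwc hwx hwnx e' he' he'w
      obtain ⟨he'c, he'r, he'x, he'card⟩ := K.mem_edgeCollar_iff.mp he'
      obtain ⟨v, hv⟩ := Finset.card_pos.mp (by omega : 0 < (e' ∩ A).card)
      have hvA : v ∈ A := (Finset.mem_inter.mp hv).2
      have hve : v ∈ e' := (Finset.mem_inter.mp hv).1
      have he'z : e' ⊆ z := hE e' he'
      have hwz : w ∩ z ∈ K.cells := by
        rcases hK.2.2.2.2.1 w hwc z hz with h | h
        · exfalso
          have hmem : v ∈ w ∩ z := Finset.mem_inter.mpr ⟨he'w hve, he'z hve⟩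
          rw [h] at hmem
          exact Finset.notMem_empty v hmem
        · exact h
      have hwcol : w ∈ K.collarCells A := by
        simp only [collarCells, Finset.mem_filter]
        refine ⟨hwc, ⟨v, Finset.mem_inter.mpr ⟨he'w hve, hvA⟩⟩, ?_⟩
        intro hwA
        exact K.crossing_not_subset hK he'c he'r he'card (fun u hu => hwA (he'w hu))
      have hEw : ∀ f ∈ K.edgeCollar A w, f ⊆ w ∩ z := by
        intro f hf
        obtain ⟨hfc, hfr, hfw, hfcard⟩ := K.mem_edgeCollar_iff.mp hf
        have hfX : f ∈ K.edgeCollar A x :=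
          K.mem_edgeCollar_iff.mpr ⟨hfc, hfr, hfw.trans hwx, hfcard⟩
        exact Finset.subset_inter hfw (hE f hfX)
      have hwr : K.rk w ≤ r := by
        have := hK.2.2.2.1 w hwc x hxc
          (Finset.ssubset_def.mpr ⟨hwx, fun h => hwnx (Finset.Subset.antisymm hwx h)⟩)
        omega
      exact (IH w hwcol (w ∩ z) hwz Finset.inter_subset_left hEw hwr).trans
        Finset.inter_subset_right
    -- C2: z is a facet of x
    obtain ⟨w, hwc, hzw, hwx, hwr⟩ := hK.2.2.2.2.2.1 z hz x hxc
      (Finset.ssubset_def.mpr ⟨hzsub, fun h => hxz h⟩)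
    have hwx' : w = x := by
      by_contra hne
      exact (Finset.ssubset_def.mp hzw).2 (hC1 w hwc hwx hne e he (hez.trans hzw.1))
    have hrzx : K.rk x = K.rk z + 1 := by rw [← hwx']; exact hwr
    by_cases h2 : K.rk x = 2
    · -- parity contradiction
      have hez' : e = z := K.eq_of_subset_of_rk_le hK hec hz hez (by omega)
      have hEsub : K.edgeCollar A x = {z} := by
        apply Finset.Subset.antisymm
        · intro f hf
          obtain ⟨hfc, hfr, hfx, hfcard⟩ := K.mem_edgeCollar_iff.mp hf
          have : f = z := K.eq_of_subset_of_rk_le hK hfc hz (hE f hf) (by omega)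
          simp [this]
        · intro f hf
          rw [Finset.mem_singleton.mp hf, ← hez']
          exact he
      have hev := K.even_edgeCollar hK hloc.1.1 hxc h2 A
      rw [hEsub, Finset.card_singleton, Nat.even_iff] at hev
      omega
    · have h3 : 3 ≤ K.rk x := by omega
      obtain ⟨w', hw'c, hew', hw'z, hw'r⟩ :=
        K.exists_rank_between hK hec hz hez (K.rk x - 3) (by omega)
      obtain ⟨z₁, hz₁, z₂, hz₂, hne12, hch⟩ :=
        hK.2.2.2.2.2.2 w' hw'c x hxc (hw'z.trans hzsub) (by omega)
      have key : ∀ zi, zi ∈ K.cells → w' ⊆ zi → zi ⊆ x → K.rk zi = K.rk w' + 1 → zi = z := by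
        intro zi hzi hw'zi hzix hzir
        have hzinx : zi ≠ x := by rintro rfl; omega
        have hsub : zi ⊆ z := hC1 zi hzi hzix hzinx e he (hew'.trans hw'zi)
        exact K.eq_of_subset_of_rk_le hK hzi hz hsub (by omega)
      have hA1 := (hch z₁ hz₁).mpr (Or.inl rfl)
      have hA2 := (hch z₂ hz₂).mpr (Or.inr rfl)
      exact hne12 ((key z₁ hz₁ hA1.1 hA1.2.1 hA1.2.2).trans
        (key z₂ hz₂ hA2.1 hA2.2.1 hA2.2.2).symm)

/-- For a local cc `K` and a sub-cell complex `J ≤ K`, the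
map `x ↦ E^x_J` on the collar `K_J` is an injective poset homomorphism whose
inverse is a poset homomorphism: `x ⊆ y` iff `E^x_J ⊆ E^y_J`. -/
theorem statement_15 (K J : Precc V) (hK : K.IsCC) (hJ : J.IsCC)
    (hloc : K.LocalCC) (hsub : J.Subcomplex K) :
    (∀ x ∈ K.collarCells J.vertices, ∀ y ∈ K.collarCells J.vertices,
      (x ⊆ y ↔ K.edgeCollar J.vertices x ⊆ K.edgeCollar J.vertices y)) ∧
    Set.InjOn (K.edgeCollar J.vertices) ↑(K.collarCells J.vertices) := by
  have main : ∀ x ∈ K.collarCells J.vertices, ∀ y ∈ K.collarCells J.vertices,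
      K.edgeCollar J.vertices x ⊆ K.edgeCollar J.vertices y → x ⊆ y := by
    intro x hx y hy hE
    obtain ⟨e, he⟩ := K.edgeCollar_nonempty hloc.2 hx
    obtain ⟨hec, her, hex, hecard⟩ := K.mem_edgeCollar_iff.mp he
    have hey : e ⊆ y := (K.mem_edgeCollar_iff.mp (hE he)).2.2.1
    have hxc : x ∈ K.cells := (Finset.mem_filter.mp hx).1
    have hyc : y ∈ K.cells := (Finset.mem_filter.mp hy).1
    have hz : x ∩ y ∈ K.cells := by
      rcases hK.2.2.2.2.1 x hxc y hyc with h | h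
      · exfalso
        obtain ⟨v, hv⟩ := hK.1 e hec
        have hmem : v ∈ x ∩ y := Finset.mem_inter.mpr ⟨hex hv, hey hv⟩
        rw [h] at hmem
        exact Finset.notMem_empty v hmem
      · exact h
    have hEz : ∀ f ∈ K.edgeCollar J.vertices x, f ⊆ x ∩ y := fun f hf =>
      Finset.subset_inter (K.mem_edgeCollar_iff.mp hf).2.2.1
        ((K.mem_edgeCollar_iff.mp (hE hf)).2.2.1)
    exact (K.collar_main hK hloc J.vertices (K.rk x) x hx (x ∩ y) hz
      Finset.inter_subset_left hEz le_rfl).trans Finset.inter_subset_right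
  constructor
  · intro x hx y hy
    constructor
    · intro hxy f hf
      obtain ⟨hfc, hfr, hfx, hfcard⟩ := K.mem_edgeCollar_iff.mp hf
      exact K.mem_edgeCollar_iff.mpr ⟨hfc, hfr, hfx.trans hxy, hfcard⟩
    · exact main x hx y hy
  · intro x hx y hy h
    exact Finset.Subset.antisymm
      (main x (Finset.mem_coe.mp hx) y (Finset.mem_coe.mp hy) (by rw [h]))
      (main y (Finset.mem_coe.mp hy) x (Finset.mem_coe.mp hx) (by rw [h]))

end Precc
end
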